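/- arXiv:0812.4628 — 5 statements merged into one kernel-verified Lean document; each statement's English description precedes it below -/
import Mathlib

section
/- Let (X, ▷_X) be a rack of type D, i.e. there exist disjoint subracks R, S of X with R ▷ S ⊆ S, S ▷ R ⊆ R, and elements r ∈ R, s ∈ S with r ▷ (s ▷ (r ▷ s)) ≠ s. If Z is a rack and π : Z → X is a surjective rack morphism, then Z is of type D. -/
/-- `Y` is a subrack of `(X, op)`. -/
def IsSubrack {X : Type*} (op : X → X → X) (Y : Set X) : Prop :=
  ∀ x ∈ Y, ∀ y ∈ Y, op x y ∈ Y

/-- A rack `(X, op)` is of type D if it contains a decomposable subrack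
`R ⊔ S` with `r ▷ (s ▷ (r ▷ s)) ≠ s` for some `r ∈ R`, `s ∈ S`. -/
def IsTypeD {X : Type*} (op : X → X → X) : Prop :=
  ∃ R S : Set X, IsSubrack op R ∧ IsSubrack op S ∧ Disjoint R S ∧
    (∀ r ∈ R, ∀ s ∈ S, op r s ∈ S) ∧ (∀ s ∈ S, ∀ r ∈ R, op s r ∈ R) ∧
    ∃ r ∈ R, ∃ s ∈ S, op r (op s (op r s)) ≠ s

/-- If `π : Z → X` is a surjective rack morphism and `X` is of type D,
then `Z` is of type D. -/
theorem stmt5 {X Z : Type*} (opX : X → X → X) (opZ : Z → Z → Z)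
    (hX1 : ∀ x, Function.Bijective (opX x))
    (hX2 : ∀ x y z, opX x (opX y z) = opX (opX x y) (opX x z))
    (hZ1 : ∀ z, Function.Bijective (opZ z))
    (hZ2 : ∀ x y z, opZ x (opZ y z) = opZ (opZ x y) (opZ x z))
    (π : Z → X) (hπ : Function.Surjective π)
    (hmor : ∀ a b, π (opZ a b) = opX (π a) (π b))
    (hD : IsTypeD opX) : IsTypeD opZ := by
  obtain ⟨R, S, hR, hS, hdisj, hRS, hSR, r, hr, s, hs, hne⟩ := hD
  obtain ⟨r', hr'⟩ := hπ r
  obtain ⟨s', hs'⟩ := hπ s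
  refine ⟨π ⁻¹' R, π ⁻¹' S, ?_, ?_, ?_, ?_, ?_, r', by simp [hr', hr], s', by simp [hs', hs], ?_⟩
  · intro a ha b hb; simp only [Set.mem_preimage, hmor] at *; exact hR _ ha _ hb
  · intro a ha b hb; simp only [Set.mem_preimage, hmor] at *; exact hS _ ha _ hb
  · exact Set.disjoint_left.mpr fun a ha hb => Set.disjoint_left.mp hdisj ha hb
  · intro a ha b hb; simp only [Set.mem_preimage, hmor] at *; exact hRS _ ha _ hb
  · intro a ha b hb; simp only [Set.mem_preimage, hmor] at *; exact hSR _ ha _ hb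
  · intro h
    apply hne
    have := congrArg π h
    simpa [hmor, hr', hs'] using this
end

section
/- Let A be a finite abelian group and T ∈ Aut(A) with fixed-point subgroup A^T = 0 (i.e. id − T is injective). Then the affine rack (A, T) with operation x ▷ y = (1−T)(x) + T(y) is indecomposable, and every abelian subrack of (A,T) has at most one element, where a subrack Y is abelian if x ▷ y = y for all x, y ∈ Y. -/
/-- If `A` is finite abelian and `T ∈ Aut A` has no non-zero fixed points,
then the affine rack `(A, T)`, `x ▷ y = (1-T)(x) + T(y)`, is indecomposable
and all its abelian subracks have at most one element. -/
theorem stmt9 (A : Type*) [AddCommGroup A] [Fintype A] (T : AddAut A)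
    (hT : ∀ a : A, T a = a → a = 0) :
    (¬ ∃ X₁ X₂ : Set A, X₁.Nonempty ∧ X₂.Nonempty ∧ Disjoint X₁ X₂ ∧
        X₁ ∪ X₂ = Set.univ ∧
        (∀ x : A, ∀ y ∈ X₁, (x - T x) + T y ∈ X₁) ∧
        (∀ x : A, ∀ y ∈ X₂, (x - T x) + T y ∈ X₂)) ∧
      ∀ Y : Set A, (∀ x ∈ Y, ∀ y ∈ Y, (x - T x) + T y = y) → Y.Subsingleton := by
  -- x ↦ x - T x is injective, hence surjective
  have hinj : Function.Injective (fun x : A => x - T x) := by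
    intro x y h
    simp only at h
    have : T (x - y) = x - y := by
      rw [map_sub]
      exact (sub_eq_sub_iff_sub_eq_sub.mp h).symm
    have := hT _ this
    exact sub_eq_zero.mp this
  have hsurj : Function.Surjective (fun x : A => x - T x) :=
    Finite.surjective_of_injective hinj
  constructor
  · rintro ⟨X₁, X₂, h1, ⟨b, hb⟩, hdis, hun, hc1, hc2⟩
    obtain ⟨a, ha⟩ := h1
    -- show X₁ = univ: for any z, pick x with x - T x = z - T a
    have : ∀ z : A, z ∈ X₁ := by
      intro z
      obtain ⟨x, hx⟩ := hsurj (z - T a)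
      have := hc1 x a ha
      simp only at hx
      rw [hx] at this
      simpa using this
    exact hdis.ne_of_mem (this b) hb rfl
  · intro Y hY x hx y hy
    have h := hY x hx y hy
    have : T (x - y) = x - y := by
      rw [map_sub]
      have h' : x - T x = y - T y := eq_sub_of_add_eq h
      exact (sub_eq_sub_iff_sub_eq_sub.mp h').symm
    exact sub_eq_zero.mp (hT _ this)
end

section
/- Let A be a finite abelian group, T ∈ Aut(A) of order d, j an integer, and suppose (id + T^{j+1})(id − T) ≠ 0 as an endomorphism of A. In G = A ⋊ ⟨T⟩, let r = (0, T) and choose v ∈ A with (id + T^{j+1})(id − T)(v) ≠ 0 and s = (v, T^j). Then r ▷ (s ▷ (r ▷ s)) ≠ s, where ▷ is conjugation in G. -/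
/-!
Since `⟨T⟩` is abelian, conjugating `(a, S)` by `(u, U)` in `A ⋊ ⟨T⟩` gives `(u + U a - S u, S)`.
Three such conjugations compute `r ▷ (s ▷ (r ▷ s))`, and its `A`-component differs from `v` by
exactly `(id + T^{j+1})(id - T)(v)`.
-/

/-- The multiplicative group structure that older Mathlib put on `AddAut A`
(composition; now Mathlib makes `AddAut A` an additive group instead). -/
instance addAutOldGroup (A : Type*) [Add A] : Group (AddAut A) where
  mul g h := AddEquiv.trans h g
  one := AddEquiv.refl _
  inv := AddEquiv.symm
  mul_assoc _ _ _ := rfl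
  one_mul _ := rfl
  mul_one _ := rfl
  inv_mul_cancel := AddEquiv.self_trans_symm

/-- The action of the cyclic group `⟨T⟩ ≤ Aut A` on `A`, as a homomorphism
into `MulAut (Multiplicative A)`, used to form `A ⋊ ⟨T⟩`. -/
def affineAction (A : Type*) [AddCommGroup A] (T : AddAut A) :
    ↥(Subgroup.zpowers T) →* MulAut (Multiplicative A) :=
  MonoidHom.mk' (fun S => AddEquiv.toMultiplicative S.1) (fun _ _ => rfl)

namespace SemidirectProduct

variable {N H : Type*} [Group N] [Group H] {φ : H →* MulAut N}

theorem mul_mul_inv_of_commute (x y : N ⋊[φ] H) (h : Commute x.right y.right) :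
    x * y * x⁻¹ = ⟨x.left * φ x.right y.left * φ y.right x.left⁻¹, y.right⟩ := by
  ext
  · simp only [mul_left, mul_right, inv_left, h.eq, map_mul, map_inv, MulAut.mul_apply,
      MulAut.apply_inv_self]
  · rw [mul_right, mul_right, inv_right, h.eq, mul_inv_cancel_right]

end SemidirectProduct

namespace AddAut

variable {A : Type*} [Add A] (T : AddAut A)

theorem apply_zpow_apply (k : ℤ) (x : A) : T ((T ^ k) x) = (T ^ (k + 1)) x := by
  rw [add_comm, zpow_one_add]
  rfl

theorem zpow_apply_apply (k : ℤ) (x : A) : (T ^ k) (T x) = (T ^ (k + 1)) x := by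
  rw [zpow_add_one]
  rfl

end AddAut

theorem affineAction_mul_mul_inv {A : Type*} [AddCommGroup A] (T : AddAut A) (u a : A)
    (U S : Subgroup.zpowers T) :
    (⟨Multiplicative.ofAdd u, U⟩ * ⟨Multiplicative.ofAdd a, S⟩ * ⟨Multiplicative.ofAdd u, U⟩⁻¹ :
        Multiplicative A ⋊[affineAction A T] Subgroup.zpowers T) =
      ⟨Multiplicative.ofAdd (u + U.1 a - S.1 u), S⟩ := by
  rw [SemidirectProduct.mul_mul_inv_of_commute ⟨_, U⟩ ⟨_, S⟩ (Std.Commutative.comm U S)]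
  simp only [sub_eq_add_neg, ofAdd_add, ofAdd_neg, map_inv]
  rfl

theorem stmt10_general (A : Type*) [AddCommGroup A] (T : AddAut A)
    (j : ℤ) (v : A)
    (hv : (v - T v) + (T ^ (j + 1)) (v - T v) ≠ 0) :
    let G := Multiplicative A ⋊[affineAction A T] ↥(Subgroup.zpowers T)
    let r : G := ⟨Multiplicative.ofAdd 0, ⟨T, Subgroup.mem_zpowers T⟩⟩
    let s : G := ⟨Multiplicative.ofAdd v, ⟨T ^ j, zpow_mem (Subgroup.mem_zpowers T) j⟩⟩
    r * (s * (r * s * r⁻¹) * s⁻¹) * r⁻¹ =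
        ⟨Multiplicative.ofAdd (T v - (T ^ (j + 1)) v + (T ^ (j + 2)) v),
          ⟨T ^ j, zpow_mem (Subgroup.mem_zpowers T) j⟩⟩ ∧
      r * (s * (r * s * r⁻¹) * s⁻¹) * r⁻¹ ≠ s := by
  intro G r s
  have hj : j + 2 = j + 1 + 1 := by ring
  have hconj : r * (s * (r * s * r⁻¹) * s⁻¹) * r⁻¹ =
      (⟨Multiplicative.ofAdd (T v - (T ^ (j + 1)) v + (T ^ (j + 2)) v),
        ⟨T ^ j, zpow_mem (Subgroup.mem_zpowers T) j⟩⟩ : G) := by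
    simp only [G, r, s, affineAction_mul_mul_inv, map_zero, map_add, map_sub, zero_add, sub_zero,
      AddAut.apply_zpow_apply, AddAut.zpow_apply_apply, hj]
    congr 2
    abel
  refine ⟨hconj, fun h => hv ?_⟩
  have hfix : T v - (T ^ (j + 1)) v + (T ^ (j + 2)) v = v := by
    rw [hconj] at h
    exact Multiplicative.ofAdd.injective (congrArg SemidirectProduct.left h)
  calc v - T v + (T ^ (j + 1)) (v - T v) = v - (T v - (T ^ (j + 1)) v + (T ^ (j + 2)) v) := by
        rw [map_sub, AddAut.zpow_apply_apply, ← hj]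
        abel
    _ = 0 := by rw [hfix, sub_self]

/-- In `G = A ⋊ ⟨T⟩`, with `r = (0, T)` and `s = (v, T^j)` where
`(id + T^{j+1})(id - T)(v) ≠ 0`, one has
`r ▷ (s ▷ (r ▷ s)) = ((T - T^{j+1} + T^{j+2})(v), T^j) ≠ s`. -/
theorem stmt10 (A : Type*) [AddCommGroup A] [Fintype A] (T : AddAut A)
    (j : ℤ) (v : A)
    (hv : (v - T v) + (T ^ (j + 1)) (v - T v) ≠ 0) :
    let G := Multiplicative A ⋊[affineAction A T] ↥(Subgroup.zpowers T)
    let r : G := ⟨Multiplicative.ofAdd 0, ⟨T, Subgroup.mem_zpowers T⟩⟩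
    let s : G := ⟨Multiplicative.ofAdd v, ⟨T ^ j, zpow_mem (Subgroup.mem_zpowers T) j⟩⟩
    r * (s * (r * s * r⁻¹) * s⁻¹) * r⁻¹ =
        ⟨Multiplicative.ofAdd (T v - (T ^ (j + 1)) v + (T ^ (j + 2)) v),
          ⟨T ^ j, zpow_mem (Subgroup.mem_zpowers T) j⟩⟩ ∧
      r * (s * (r * s * r⁻¹) * s⁻¹) * r⁻¹ ≠ s :=
  stmt10_general A T j v hv
end

section
/- Let σ₁ = (1 2)(3 4 5 6 ⋯ j+2) and σ₂ = (1 2)(5 4 3 6 ⋯ j+2) in S_{j+2}, where j > 3 is odd. Then (σ₁σ₂)² ≠ (σ₂σ₁)². -/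
/-!
Both squares are evaluated at `3`. Since `σ₁ 3 = 4` and `σ₂ 4 = 3`, the point `3` is fixed by
`σ₂σ₁`, so equality of the squares forces `(σ₁σ₂)² 3 = 3`. But `(σ₁σ₂) 3 = 7` and
`(σ₁σ₂) (j + 1) = 3`, so injectivity of `σ₁σ₂` would give `j + 1 = 7`, i.e. `j = 6`, which is even.
-/

open Equiv

namespace List

theorem formPerm_range'_apply_add {s n i : ℕ} (hi : i < n) :
    (range' s n).formPerm (s + i) = s + (i + 1) % n := by
  have := formPerm_apply_getElem (range' s n) (nodup_range' 1 Nat.one_pos) i (by simpa using hi)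
  simpa only [getElem_range', length_range', Nat.one_mul] using this

theorem formPerm_range'_apply_of_lt {s n x : ℕ} (hs : s ≤ x) (hx : x + 1 < s + n) :
    (range' s n).formPerm x = x + 1 := by
  obtain ⟨i, rfl⟩ := Nat.exists_eq_add_of_le hs
  rw [formPerm_range'_apply_add (by omega), Nat.mod_eq_of_lt (by omega), Nat.add_assoc]

theorem formPerm_range'_apply_last {s n : ℕ} (hn : 0 < n) :
    (range' s n).formPerm (s + (n - 1)) = s := by
  rw [formPerm_range'_apply_add (by omega), Nat.sub_add_cancel hn, Nat.mod_self, Nat.add_zero]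

end List

/-- For `j > 3` odd, `σ₁ = (1 2)(3 4 5 ⋯ j+2)` and
`σ₂ = (3 5) σ₁ (3 5)⁻¹ = (1 2)(5 4 3 6 ⋯ j+2)` satisfy `(σ₁σ₂)² ≠ (σ₂σ₁)²`. -/
theorem stmt13 (j : ℕ) (hj : 3 < j) (hodd : Odd j) :
    let σ₁ : Equiv.Perm ℕ := Equiv.swap 1 2 * (List.range' 3 j).formPerm
    let σ₂ : Equiv.Perm ℕ := Equiv.swap 3 5 * σ₁ * (Equiv.swap 3 5)⁻¹
    (σ₁ * σ₂) ^ 2 ≠ (σ₂ * σ₁) ^ 2 := by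
  intro σ₁ σ₂ h
  have hj5 : 5 ≤ j := by obtain ⟨k, rfl⟩ := hodd; omega
  have hσ₁ : ∀ x, 3 ≤ x → x + 1 < 3 + j → σ₁ x = x + 1 := fun x h₁ h₂ => by
    simp only [σ₁, Perm.mul_apply, List.formPerm_range'_apply_of_lt h₁ h₂]
    exact swap_apply_of_ne_of_ne (by omega) (by omega)
  have hσ₁_last : σ₁ (j + 2) = 3 := by
    have := List.formPerm_range'_apply_last (s := 3) (n := j) (by omega)
    simp only [σ₁, Perm.mul_apply, show j + 2 = 3 + (j - 1) by omega, this]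
    exact swap_apply_of_ne_of_ne (by omega) (by omega)
  have hσ₂ : ∀ x, σ₂ x = swap 3 5 (σ₁ (swap 3 5 x)) := fun x => by
    simp only [σ₂, swap_inv, Perm.mul_apply]
  have hswap : ∀ x, x ≠ 3 → x ≠ 5 → swap 3 5 x = x := fun _ => swap_apply_of_ne_of_ne
  have hfix : (σ₂ * σ₁) 3 = 3 := by
    rw [Perm.mul_apply, hσ₁ 3 le_rfl (by omega), hσ₂, hswap 4 (by omega) (by omega),
      hσ₁ 4 (by omega) (by omega), swap_apply_right]
  have h3 : (σ₁ * σ₂) 3 = 7 := by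
    rw [Perm.mul_apply, hσ₂, swap_apply_left, hσ₁ 5 (by omega) (by omega),
      hswap 6 (by omega) (by omega), hσ₁ 6 (by omega) (by omega)]
  have hj1 : (σ₁ * σ₂) (j + 1) = 3 := by
    rw [Perm.mul_apply, hσ₂, hswap (j + 1) (by omega) (by omega), hσ₁ (j + 1) (by omega) (by omega),
      hswap (j + 1 + 1) (by omega) (by omega), hσ₁_last]
  have h7 : (σ₁ * σ₂) 7 = (σ₁ * σ₂) (j + 1) := by
    rw [hj1, ← h3, ← Perm.mul_apply, ← sq, h, sq, Perm.mul_apply, hfix, hfix]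
  have : 7 = j + 1 := (σ₁ * σ₂).injective h7
  obtain ⟨k, rfl⟩ := hodd
  omega
end

section
/- In A₉, the elements σ₁ = (1 2 3)(4 5 6)(7 8 9) and σ₂ = (1 2 4)(3 5 6)(7 9 8) satisfy (σ₁σ₂)² ≠ (σ₂σ₁)² and are not conjugate in the subgroup H = ⟨σ₁, σ₂⟩, which is isomorphic to A₄ × Z/3. -/
set_option maxRecDepth 100000
set_option maxHeartbeats 2000000
open Equiv Equiv.Perm

namespace Stmt18Aux

abbrev V := Fin 4
abbrev ND := {s : Sym2 V // ¬ s.IsDiag}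

def tbl : V → V → Fin 10
  | 0, 1 => 1 | 1, 0 => 1
  | 0, 2 => 2 | 2, 0 => 2
  | 0, 3 => 3 | 3, 0 => 3
  | 1, 2 => 4 | 2, 1 => 4
  | 1, 3 => 6 | 3, 1 => 6
  | 2, 3 => 5 | 3, 2 => 5
  | _, _ => 0

def ι₀ : Sym2 V → Fin 10 := Sym2.lift ⟨tbl, by decide⟩

def myP : Fin 10 → Prop := fun x => x ∈ ({1,2,3,4,5,6} : Finset (Fin 10))

instance : DecidablePred myP := fun x => by unfold myP; infer_instance

def back : Fin 10 → ND
  | 2 => ⟨s(0,2), by decide⟩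
  | 3 => ⟨s(0,3), by decide⟩
  | 4 => ⟨s(1,2), by decide⟩
  | 5 => ⟨s(2,3), by decide⟩
  | 6 => ⟨s(1,3), by decide⟩
  | _ => ⟨s(0,1), by decide⟩

def eqv : ND ≃ {x // myP x} where
  toFun s := ⟨ι₀ s.1, by revert s; decide⟩
  invFun x := back x.1
  left_inv := by decide
  right_inv := by decide

theorem pres (f : V → V) (hf : Function.Injective f) (s : Sym2 V) (hs : ¬ s.IsDiag) :
    ¬ (Sym2.map f s).IsDiag := by
  induction s using Sym2.ind with
  | _ a b =>
    rw [Sym2.map_pair_eq]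
    rw [Sym2.isDiag_iff_proj_eq] at *
    exact fun h => hs (hf h)

def Egrp : Perm V →* Perm ND where
  toFun g :=
    { toFun := fun s => ⟨Sym2.map g s.1, pres g g.injective s.1 s.2⟩,
      invFun := fun s => ⟨Sym2.map g.symm s.1, pres g.symm g.symm.injective s.1 s.2⟩,
      left_inv := fun ⟨s, hs⟩ => Subtype.ext (by
        induction s using Sym2.ind with
        | _ a b => simp),
      right_inv := fun ⟨s, hs⟩ => Subtype.ext (by
        induction s using Sym2.ind with
        | _ a b => simp) }
  map_one' := Equiv.ext fun ⟨s, hs⟩ => Subtype.ext (by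
    induction s using Sym2.ind with
    | _ a b => simp)
  map_mul' g h := Equiv.ext fun ⟨s, hs⟩ => Subtype.ext (by
    induction s using Sym2.ind with
    | _ a b => simp)

def F : Perm V →* Perm (Fin 10) := (extendDomainHom eqv).comp Egrp

theorem F_inj : Function.Injective F :=
  (extendDomainHom_injective eqv).comp ((injective_iff_map_eq_one Egrp).mpr (by decide))

def s1 : Perm (Fin 10) :=
  [(1 : Fin 10), 2, 3].formPerm * [(4 : Fin 10), 5, 6].formPerm * [(7 : Fin 10), 8, 9].formPerm

def s2 : Perm (Fin 10) :=
  [(1 : Fin 10), 2, 4].formPerm * [(3 : Fin 10), 5, 6].formPerm * [(7 : Fin 10), 9, 8].formPerm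

def cp : Perm (Fin 10) := [(7 : Fin 10), 8, 9].formPerm

def ζ : Multiplicative (ZMod 3) →* Perm (Fin 10) where
  toFun z := cp ^ (Multiplicative.toAdd z).val
  map_one' := by decide
  map_mul' := by decide

abbrev A4 := alternatingGroup (Fin 4)

theorem Fcomm : ∀ g : Perm V, ∀ n : Multiplicative (ZMod 3), Commute (F g) (ζ n) := by
  have h : ∀ g : Perm V, ∀ n : ZMod 3, F g * cp ^ n.val = cp ^ n.val * F g := by decide
  exact fun g n => h g (Multiplicative.toAdd n)

def ψ : A4 × Multiplicative (ZMod 3) →* Perm (Fin 10) :=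
  MonoidHom.noncommCoprod (F.comp A4.subtype) ζ (fun m n => Fcomm m.1 n)

theorem ψ_inj : Function.Injective ψ :=
  (injective_iff_map_eq_one ψ).mpr (by decide)

def a1 : Perm V := [(1:V),2,3].formPerm
def a2 : Perm V := [(0:V),2,1].formPerm

def x1 : A4 × Multiplicative (ZMod 3) :=
  (⟨a1, by rw [mem_alternatingGroup]; decide⟩, Multiplicative.ofAdd 1)
def x2 : A4 × Multiplicative (ZMod 3) :=
  (⟨a2, by rw [mem_alternatingGroup]; decide⟩, Multiplicative.ofAdd 2)

theorem hψ1 : ψ x1 = s1 := by decide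
theorem hψ2 : ψ x2 = s2 := by decide

def Hgrp : Subgroup (Perm (Fin 10)) := Subgroup.closure {s1, s2}

theorem hs1H : s1 ∈ Hgrp := Subgroup.subset_closure (Set.mem_insert _ _)
theorem hs2H : s2 ∈ Hgrp := Subgroup.subset_closure (Set.mem_insert_of_mem _ rfl)

theorem hcpH : cp ∈ Hgrp := by
  have h : cp = s1*s2*s2*s1*s2*s2 := by decide
  rw [h]
  exact mul_mem (mul_mem (mul_mem (mul_mem (mul_mem hs1H hs2H) hs2H) hs1H) hs2H) hs2H

theorem hFa1 : F a1 ∈ Hgrp := by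
  have h : F a1 = s2*s1*s1*s2 := by decide
  rw [h]; exact mul_mem (mul_mem (mul_mem hs2H hs1H) hs1H) hs2H

theorem hFa2 : F a2 ∈ Hgrp := by
  have h : F a2 = s1*s2*s2*s1 := by decide
  rw [h]; exact mul_mem (mul_mem (mul_mem hs1H hs2H) hs2H) hs1H

theorem hFg : ∀ g : Perm V, Perm.sign g = 1 → F g ∈ Hgrp := by
  have hd : ∀ g : Perm V, Perm.sign g = 1 →
      g = 1 ∨ g = a1 ∨ g = a1*a1 ∨ g = a1*a1*a2 ∨ g = a2*a2 ∨ g = a1*a1*a2*a1 ∨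
      g = a2 ∨ g = a2*a1 ∨ g = a1*a2*a2 ∨ g = a1*a2 ∨ g = a1*a1*a2*a2 ∨ g = a1*a2*a1 := by
    decide
  have hm : ∀ u v : Perm V, F u ∈ Hgrp → F v ∈ Hgrp → F (u*v) ∈ Hgrp := fun u v hu hv => by
    rw [map_mul]; exact mul_mem hu hv
  have h1 : F 1 ∈ Hgrp := by rw [map_one]; exact one_mem _
  intro g hg
  rcases hd g hg with rfl|rfl|rfl|rfl|rfl|rfl|rfl|rfl|rfl|rfl|rfl|rfl
  exacts [h1, hFa1, hm _ _ hFa1 hFa1, hm _ _ (hm _ _ hFa1 hFa1) hFa2, hm _ _ hFa2 hFa2,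
    hm _ _ (hm _ _ (hm _ _ hFa1 hFa1) hFa2) hFa1, hFa2, hm _ _ hFa2 hFa1,
    hm _ _ (hm _ _ hFa1 hFa2) hFa2, hm _ _ hFa1 hFa2,
    hm _ _ (hm _ _ (hm _ _ hFa1 hFa1) hFa2) hFa2, hm _ _ (hm _ _ hFa1 hFa2) hFa1]

theorem hζH : ∀ z : Multiplicative (ZMod 3), ζ z ∈ Hgrp := by
  have hd : ∀ z : ZMod 3, cp ^ z.val = 1 ∨ cp ^ z.val = cp ∨ cp ^ z.val = cp * cp := by decide
  intro z
  have h : ζ z = cp ^ (Multiplicative.toAdd z).val := rfl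
  rw [h]
  rcases hd (Multiplicative.toAdd z) with h'|h'|h' <;> rw [h']
  exacts [one_mem _, hcpH, mul_mem hcpH hcpH]

theorem range_le : ∀ y, ψ y ∈ Hgrp := by
  rintro ⟨⟨g, hg⟩, z⟩
  have h : ψ (⟨g, hg⟩, z) = F g * ζ z := rfl
  rw [h]
  exact mul_mem (hFg g (mem_alternatingGroup.mp hg)) (hζH z)

theorem hrange : ψ.range = Hgrp := by
  apply le_antisymm
  · rintro x ⟨y, rfl⟩; exact range_le y
  · exact (Subgroup.closure_le _).mpr (by rintro x (rfl|rfl); exacts [⟨x1, hψ1⟩, ⟨x2, hψ2⟩])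

theorem keyz : ∀ w : Multiplicative (ZMod 3),
    w * Multiplicative.ofAdd (1 : ZMod 3) * w⁻¹ = Multiplicative.ofAdd (2 : ZMod 3) → False := by
  have h : ∀ w : ZMod 3, Multiplicative.ofAdd w * Multiplicative.ofAdd (1 : ZMod 3) *
      (Multiplicative.ofAdd w)⁻¹ = Multiplicative.ofAdd (2 : ZMod 3) → False := by decide
  exact fun w => h (Multiplicative.toAdd w)

end Stmt18Aux

/-- In `A₉`, `σ₁ = (1 2 3)(4 5 6)(7 8 9)` and `σ₂ = (1 2 4)(3 5 6)(7 9 8)`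
satisfy `(σ₁σ₂)² ≠ (σ₂σ₁)²` and are not conjugate in `H = ⟨σ₁, σ₂⟩`, which is
isomorphic to `A₄ × Z/3`. -/
theorem stmt18 :
    let σ₁ : Equiv.Perm (Fin 10) :=
      [(1 : Fin 10), 2, 3].formPerm * [(4 : Fin 10), 5, 6].formPerm *
        [(7 : Fin 10), 8, 9].formPerm
    let σ₂ : Equiv.Perm (Fin 10) :=
      [(1 : Fin 10), 2, 4].formPerm * [(3 : Fin 10), 5, 6].formPerm *
        [(7 : Fin 10), 9, 8].formPerm
    let H : Subgroup (Equiv.Perm (Fin 10)) := Subgroup.closure {σ₁, σ₂}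
    σ₁ ∈ alternatingGroup (Fin 10) ∧ σ₂ ∈ alternatingGroup (Fin 10) ∧
      (σ₁ * σ₂) ^ 2 ≠ (σ₂ * σ₁) ^ 2 ∧
      (¬ ∃ x ∈ H, x * σ₁ * x⁻¹ = σ₂) ∧
      Nonempty (H ≃* alternatingGroup (Fin 4) × Multiplicative (ZMod 3)) := by
  intro σ₁ σ₂ H
  refine ⟨by rw [Equiv.Perm.mem_alternatingGroup]; decide,
          by rw [Equiv.Perm.mem_alternatingGroup]; decide,
          by decide, ?_, ?_⟩
  · rintro ⟨x, hx, heq⟩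
    have hx' : x ∈ Stmt18Aux.ψ.range := by rw [Stmt18Aux.hrange]; exact hx
    obtain ⟨y, rfl⟩ := hx'
    have h2 : Stmt18Aux.ψ (y * Stmt18Aux.x1 * y⁻¹) = Stmt18Aux.ψ Stmt18Aux.x2 := by
      rw [map_mul, map_mul, map_inv, Stmt18Aux.hψ1, Stmt18Aux.hψ2]
      exact heq
    have h3 := Stmt18Aux.ψ_inj h2
    have h4 := congrArg Prod.snd h3
    simp only [Prod.snd_mul, Prod.snd_inv] at h4
    exact Stmt18Aux.keyz _ h4
  · exact ⟨(MulEquiv.subgroupCongr Stmt18Aux.hrange.symm).trans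
      (MonoidHom.ofInjective Stmt18Aux.ψ_inj).symm⟩
end
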